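/- arXiv:2310.01155 — 10 statements merged into one kernel-verified Lean document; each statement's English description precedes it below -/
import Mathlib

section
/- Let a, R, P₀, P₁, G > 0 and B ≥ 0 be real numbers. Then the optimal blob-posting cost per transaction equals the optimal main-market cost per transaction, i.e. √(2·(P₀·G + B)·a/R) = P₁·G + √(2·P₀·G·a/R), if and only if B = R·P₁²·G²/(2a) + 2·P₁·G·√(R·P₀·G/(2a)). -/
/-- For `a, R, P₀, P₁, G > 0` and `B ≥ 0`, the optimal blob-posting
per-transaction cost equals the optimal main-market per-transaction cost,
`√(2·(P₀·G + B)·a/R) = P1·G + √(2·P₀·G·a/R)`, iff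
`B = R·P₁²·G²/(2a) + 2·P₁·G·√(R·P₀·G/(2a))`. -/
theorem indifference_condition
    (a R P0 P1 G B : ℝ) (ha : 0 < a) (hR : 0 < R) (hP0 : 0 < P0)
    (hP1 : 0 < P1) (hG : 0 < G) (hB : 0 ≤ B) :
    Real.sqrt (2 * (P0 * G + B) * a / R) = P1 * G + Real.sqrt (2 * P0 * G * a / R) ↔
      B = R * P1 ^ 2 * G ^ 2 / (2 * a) + 2 * P1 * G * Real.sqrt (R * P0 * G / (2 * a)) := by
  set s := Real.sqrt (2 * P0 * G * a / R) with hsdef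
  have hx : (0:ℝ) ≤ 2 * P0 * G * a / R := by positivity
  have hs2 : s ^ 2 = 2 * P0 * G * a / R := Real.sq_sqrt hx
  have hspos : 0 < s := Real.sqrt_pos.2 (by positivity)
  have key : Real.sqrt (R * P0 * G / (2 * a)) = R / (2 * a) * s := by
    have h1 : R / (2 * a) * s = Real.sqrt ((R / (2 * a)) ^ 2 * (2 * P0 * G * a / R)) := by
      rw [Real.sqrt_mul (sq_nonneg _), Real.sqrt_sq (by positivity)]
    rw [h1]
    congr 1
    field_simp
  have hs2' : s ^ 2 * R = 2 * P0 * G * a := by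
    rw [hs2]; field_simp
  rw [Real.sqrt_eq_iff_eq_sq (by positivity) (by positivity), key]
  constructor
  · intro h
    have hRne : R ≠ 0 := hR.ne'
    have hane : a ≠ 0 := ha.ne'
    field_simp at h ⊢
    nlinarith [hs2', mul_pos ha hR]
  · intro h
    have hRne : R ≠ 0 := hR.ne'
    have hane : a ≠ 0 := ha.ne'
    field_simp at h ⊢
    nlinarith [hs2', mul_pos ha hR]
end

section
/- Let a > 0, k > 0, n ≥ 1, and R₁, ..., Rₙ > 0. For B > 0 set tᵢ = √(2B/(a·Rᵢ)) (the optimal blob-posting interval of rollup i when P₀ = 0). Then the market-clearing condition ∑_{i=1}^{n} 1/tᵢ = k holds if and only if B = a·(∑_{i=1}^{n} √Rᵢ)² / (2k²). -/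
/-- For `a, k > 0`, `n ≥ 1` rollups with rates `Rᵢ > 0`, and a blob
price `B > 0`, with optimal posting intervals `tᵢ = √(2B/(a·Rᵢ))` (case `P₀ = 0`),
the market-clearing condition `∑ᵢ 1/tᵢ = k` holds iff
`B = a·(∑ᵢ √Rᵢ)²/(2k²)`. -/
theorem equilibrium_blob_price
    (a k : ℝ) (ha : 0 < a) (hk : 0 < k)
    (n : ℕ) (hn : 1 ≤ n) (R : Fin n → ℝ) (hR : ∀ i, 0 < R i)
    (B : ℝ) (hB : 0 < B) :
    (∑ i : Fin n, 1 / Real.sqrt (2 * B / (a * R i)) = k) ↔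
      B = a * (∑ i : Fin n, Real.sqrt (R i)) ^ 2 / (2 * k ^ 2) := by
  set S := ∑ i : Fin n, Real.sqrt (R i) with hS
  have h2B : (0:ℝ) < 2 * B := by linarith
  have hsum : ∑ i : Fin n, 1 / Real.sqrt (2 * B / (a * R i))
      = Real.sqrt a / Real.sqrt (2 * B) * S := by
    rw [hS, Finset.mul_sum]
    refine Finset.sum_congr rfl fun i _ => ?_
    have hRi := hR i
    rw [Real.sqrt_div h2B.le,
        one_div, inv_div, Real.sqrt_mul ha.le]
    ring
  have hSpos : 0 < S := by
    have : Nonempty (Fin n) := ⟨⟨0, hn⟩⟩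
    exact Finset.sum_pos (fun i _ => Real.sqrt_pos.mpr (hR i)) Finset.univ_nonempty
  rw [hsum]
  constructor
  · intro h
    have hsq : (Real.sqrt a / Real.sqrt (2 * B) * S) ^ 2 = k ^ 2 := by rw [h]
    rw [mul_pow, div_pow, Real.sq_sqrt ha.le, Real.sq_sqrt h2B.le] at hsq
    field_simp at hsq ⊢
    nlinarith [sq_nonneg S]
  · intro h
    subst h
    have hk2 : (0:ℝ) < 2 * k ^ 2 := by positivity
    have : 2 * (a * S ^ 2 / (2 * k ^ 2)) = (Real.sqrt a * S / k) ^ 2 := by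
      rw [div_pow, mul_pow, Real.sq_sqrt ha.le]
      field_simp
    rw [this, Real.sqrt_sq (by positivity)]
    field_simp
end

section
/- Let c > 0, t ≥ 0, and x, y > 0. Then c·(√x + √y + t)²/2 ≤ c·(√(x+y) + t)² ≤ c·(√x + √y + t)². In the model's terms: if two rollups with rates Rᵢ = x and Rⱼ = y both posted blobs in the initial equilibrium with price B = c·(√Rᵢ + √Rⱼ + t)² (where c = a/(2k²) and t is the sum of √R over the other blob-posting rollups), and they merge their blob posting so that the new price is Bᴺ = c·(√(Rᵢ+Rⱼ) + t)², then B/2 ≤ Bᴺ ≤ B. -/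
/-- For `c > 0`, `t ≥ 0`, `x, y > 0`:
`c·(√x + √y + t)²/2 ≤ c·(√(x+y) + t)² ≤ c·(√x + √y + t)²`.
In model terms: if two blob-posting rollups with rates `x` and `y` merge, the
new blob price `Bᴺ = c·(√(x+y)+t)²` satisfies `B/2 ≤ Bᴺ ≤ B` where
`B = c·(√x+√y+t)²`. -/
theorem merged_price_both_blob_posting
    (c t x y : ℝ) (hc : 0 < c) (ht : 0 ≤ t) (hx : 0 < x) (hy : 0 < y) :
    c * (Real.sqrt x + Real.sqrt y + t) ^ 2 / 2 ≤
      c * (Real.sqrt (x + y) + t) ^ 2 ∧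
    c * (Real.sqrt (x + y) + t) ^ 2 ≤ c * (Real.sqrt x + Real.sqrt y + t) ^ 2 := by
  have hsx : Real.sqrt x ^ 2 = x := Real.sq_sqrt hx.le
  have hsy : Real.sqrt y ^ 2 = y := Real.sq_sqrt hy.le
  have hsxy : Real.sqrt (x + y) ^ 2 = x + y := Real.sq_sqrt (by linarith)
  have h0x := Real.sqrt_nonneg x
  have h0y := Real.sqrt_nonneg y
  have h0xy := Real.sqrt_nonneg (x + y)
  have hmpos : 0 < Real.sqrt (x + y) := Real.sqrt_pos.mpr (by linarith)
  have hs2 : (Real.sqrt x + Real.sqrt y) ^ 2 ≤ 2 * (x + y) := by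
    nlinarith [sq_nonneg (Real.sqrt x - Real.sqrt y)]
  have hle : Real.sqrt (x + y) ≤ Real.sqrt x + Real.sqrt y := by
    nlinarith [mul_nonneg h0x h0y]
  have hle2 : Real.sqrt x + Real.sqrt y ≤ 2 * Real.sqrt (x + y) := by
    nlinarith
  constructor
  · have key : (Real.sqrt x + Real.sqrt y + t) ^ 2 / 2 ≤ (Real.sqrt (x + y) + t) ^ 2 := by
      nlinarith [mul_nonneg ht (sub_nonneg.mpr hle2), sq_nonneg t]
    nlinarith [mul_le_mul_of_nonneg_left key hc.le]
  · have key : (Real.sqrt (x + y) + t) ^ 2 ≤ (Real.sqrt x + Real.sqrt y + t) ^ 2 := by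
      nlinarith [mul_nonneg ht (sub_nonneg.mpr hle)]
    nlinarith [mul_le_mul_of_nonneg_left key hc.le]
end

section
/- Let c > 0, t ≥ 0, and x, y > 0. Then c·(√(x+y) + t)² = c·(√x + √y + t)²/2 holds if and only if t = 0 and x = y. That is, the new equilibrium blob price after two blob-posting rollups merge equals exactly half of the old price if and only if these are the only two rollups posting blobs and their transaction rates are equal. -/
/-- For `c > 0`, `t ≥ 0`, `x, y > 0`:
`c·(√(x+y) + t)² = c·(√x + √y + t)²/2` iff `t = 0 ∧ x = y`, i.e. the new
equilibrium blob price after two blob-posting rollups merge equals exactly half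
of the old price iff they are the only blob posters and their rates are equal. -/
theorem merged_price_halves_iff
    (c t x y : ℝ) (hc : 0 < c) (ht : 0 ≤ t) (hx : 0 < x) (hy : 0 < y) :
    c * (Real.sqrt (x + y) + t) ^ 2 = c * (Real.sqrt x + Real.sqrt y + t) ^ 2 / 2 ↔
      t = 0 ∧ x = y := by
  have hs : Real.sqrt (x + y) ^ 2 = x + y := Real.sq_sqrt (by linarith)
  have hax : Real.sqrt x ^ 2 = x := Real.sq_sqrt hx.le
  have hay : Real.sqrt y ^ 2 = y := Real.sq_sqrt hy.le
  have ha0 : 0 < Real.sqrt x := Real.sqrt_pos.mpr hx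
  have hb0 : 0 < Real.sqrt y := Real.sqrt_pos.mpr hy
  have hs0 : 0 < Real.sqrt (x + y) := Real.sqrt_pos.mpr (by linarith)
  constructor
  · intro h
    have h2 : 2 * (Real.sqrt (x + y) + t) ^ 2
        = (Real.sqrt x + Real.sqrt y + t) ^ 2 := by
      have := mul_left_cancel₀ hc.ne'
        (show c * ((Real.sqrt (x + y) + t) ^ 2)
            = c * ((Real.sqrt x + Real.sqrt y + t) ^ 2 / 2) by linarith)
      linarith
    have hub : (Real.sqrt x + Real.sqrt y) ^ 2 ≤ 2 * (x + y) := by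
      nlinarith [sq_nonneg (Real.sqrt x - Real.sqrt y)]
    have hlt : Real.sqrt x + Real.sqrt y < 2 * Real.sqrt (x + y) := by
      nlinarith [mul_pos hs0 hs0]
    have htn : t * (4 * Real.sqrt (x + y) - 2 * (Real.sqrt x + Real.sqrt y)) ≥ 0 :=
      mul_nonneg ht (by linarith)
    have ht2 : t ^ 2 ≤ 0 := by nlinarith
    have ht0 : t = 0 := by
      have : t ^ 2 = 0 := le_antisymm ht2 (sq_nonneg t)
      exact pow_eq_zero_iff (by norm_num) |>.mp this
    subst ht0
    have hab2 : (Real.sqrt x - Real.sqrt y) ^ 2 ≤ 0 := by nlinarith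
    have hab : Real.sqrt x = Real.sqrt y := by
      have : (Real.sqrt x - Real.sqrt y) ^ 2 = 0 :=
        le_antisymm hab2 (sq_nonneg _)
      have := pow_eq_zero_iff (n := 2) (by norm_num) |>.mp this
      linarith
    exact ⟨rfl, by rw [← hax, ← hay, hab]⟩
  · rintro ⟨rfl, rfl⟩
    have h1 : Real.sqrt (x + x) ^ 2 = x + x := Real.sq_sqrt (by linarith)
    linear_combination c * h1 - 2 * c * hax
end

section
/- Let c > 0, t ≥ 0, and Rᵢ ≥ R > 0. Then c·(√Rᵢ + t)² ≤ c·(√(Rᵢ + R) + t)² ≤ 2·c·(√Rᵢ + t)². In the model's terms: if a blob-posting rollup with rate Rᵢ merges with a main-market rollup with rate R ≤ Rᵢ, so that the blob price changes from B = c·(√Rᵢ + t)² to Bᴺ = c·(√(Rᵢ+R) + t)² (with c = a/(2k²) and t the sum of √R over other blob posters), then B ≤ Bᴺ ≤ 2B. -/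
/-- For `c > 0`, `t ≥ 0`, `Rᵢ ≥ R > 0`:
`c·(√Rᵢ + t)² ≤ c·(√(Rᵢ+R) + t)² ≤ 2·c·(√Rᵢ + t)²`.
In model terms: when a blob-posting rollup of rate `Rᵢ` merges with a
main-market rollup of rate `R ≤ Rᵢ`, the blob price changes from
`B = c·(√Rᵢ+t)²` to `Bᴺ = c·(√(Rᵢ+R)+t)²` with `B ≤ Bᴺ ≤ 2B`. -/
theorem merged_price_mixed_strategies
    (c t Ri R : ℝ) (hc : 0 < c) (ht : 0 ≤ t) (hR : 0 < R) (hRi : R ≤ Ri) :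
    c * (Real.sqrt Ri + t) ^ 2 ≤ c * (Real.sqrt (Ri + R) + t) ^ 2 ∧
    c * (Real.sqrt (Ri + R) + t) ^ 2 ≤ 2 * (c * (Real.sqrt Ri + t) ^ 2) := by
  have hRi0 : (0:ℝ) ≤ Ri := le_trans hR.le hRi
  have hs : Real.sqrt Ri ≤ Real.sqrt (Ri + R) :=
    Real.sqrt_le_sqrt (by linarith)
  have hs0 : 0 ≤ Real.sqrt Ri := Real.sqrt_nonneg _
  have hs1 : 0 ≤ Real.sqrt (Ri + R) := Real.sqrt_nonneg _
  constructor
  · apply mul_le_mul_of_nonneg_left _ hc.le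
    apply pow_le_pow_left₀ (by linarith) (by linarith)
  · have h2 : Real.sqrt (Ri + R) ≤ Real.sqrt 2 * Real.sqrt Ri := by
      rw [← Real.sqrt_mul (by norm_num)]
      exact Real.sqrt_le_sqrt (by linarith)
    have ht2 : t ≤ Real.sqrt 2 * t := by
      nlinarith [Real.one_le_sqrt.mpr (by norm_num : (1:ℝ) ≤ 2)]
    have key : Real.sqrt (Ri + R) + t ≤ Real.sqrt 2 * (Real.sqrt Ri + t) := by
      rw [mul_add]; linarith
    have hsq : (Real.sqrt (Ri + R) + t) ^ 2 ≤ 2 * (Real.sqrt Ri + t) ^ 2 := by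
      have := pow_le_pow_left₀ (by linarith) key 2
      have h2sq : Real.sqrt 2 ^ 2 = 2 := Real.sq_sqrt (by norm_num)
      calc (Real.sqrt (Ri + R) + t) ^ 2 ≤ (Real.sqrt 2 * (Real.sqrt Ri + t)) ^ 2 := this
        _ = 2 * (Real.sqrt Ri + t) ^ 2 := by rw [mul_pow, h2sq]
    nlinarith
end

section
/- Let a, R, B, Bᴺ > 0 and 0 < f < 1. Define t_J = √(2Bᴺ/(a·(1+f)·R)), d_{J,L} = a·R·t_J²/2, d_{J,S} = a·R·f·t_J²/2, C_J = √(2·Bᴺ·(1+f)·R/a), C_{J,L} = C_J/(1+f), C_{J,S} = f·C_J/(1+f), Tr_L = √(2·B·a/R), and Tr_S = √(2·B·a/(R·f)). Then (Bᴺ + d_{J,S} − d_{J,L} − C_{J,S}·Tr_S + C_{J,L}·Tr_L)/2 = Bᴺ·f/(1+f) + √(Bᴺ·B)·(1 − √f)/√(1+f). In particular, the Nash bargaining payment of the large rollup depends only on B, Bᴺ and f, not on R or a. -/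
/-!
The joint interval makes both delay costs explicit: `a R t_J² = 2 Bᴺ / (1 + f)`, so
`d_{J,S} − d_{J,L} = Bᴺ (f − 1)/(1 + f)`. In the products `C_J · Tr` the factors `R` and `a`
cancel under the square root, leaving `√(4 (1 + f) Bᴺ B)` (divided by `√f` for the small rollup).
-/

open Real

lemma delay_sub_of_joint_interval {a R BN f : ℝ} (ha : 0 < a) (hR : 0 < R) (hBN : 0 ≤ BN)
    (hf : 0 < 1 + f) :
    a * R * f * √(2 * BN / (a * (1 + f) * R)) ^ 2 / 2
        - a * R * √(2 * BN / (a * (1 + f) * R)) ^ 2 / 2 = BN * (f - 1) / (1 + f) := by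
  rw [sq_sqrt (by positivity)]
  field_simp

lemma sqrt_joint_count_mul_sqrt_cost {a R BN B g c : ℝ} (ha : 0 < a) (hR : 0 < R)
    (hBN : 0 ≤ BN) (hg : 0 ≤ g) (hc : 0 ≤ c) :
    √(2 * BN * g * R / a) * √(2 * B * a / (R * c)) = 2 * √g / √c * √(BN * B) := by
  have h4 : √4 = 2 := by
    rw [show (4 : ℝ) = 2 ^ 2 by norm_num, sqrt_sq zero_le_two]
  rw [← sqrt_mul (by positivity),
    show 2 * BN * g * R / a * (2 * B * a / (R * c)) = 4 * g / c * (BN * B) by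
      field_simp; ring,
    sqrt_mul (by positivity), sqrt_div' _ hc, sqrt_mul zero_le_four, h4]

theorem nash_payment_formula_general
    (a R B BN f : ℝ) (ha : 0 < a) (hR : 0 < R) (hBN : 0 < BN)
    (hf0 : 0 < f)
    (tJ dJL dJS CJ CJL CJS TrL TrS : ℝ)
    (htJ : tJ = Real.sqrt (2 * BN / (a * (1 + f) * R)))
    (hdJL : dJL = a * R * tJ ^ 2 / 2)
    (hdJS : dJS = a * R * f * tJ ^ 2 / 2)
    (hCJ : CJ = Real.sqrt (2 * BN * (1 + f) * R / a))
    (hCJL : CJL = CJ / (1 + f))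
    (hCJS : CJS = f * CJ / (1 + f))
    (hTrL : TrL = Real.sqrt (2 * B * a / R))
    (hTrS : TrS = Real.sqrt (2 * B * a / (R * f))) :
    (BN + dJS - dJL - CJS * TrS + CJL * TrL) / 2 =
      BN * f / (1 + f) +
        Real.sqrt (BN * B) * (1 - Real.sqrt f) / Real.sqrt (1 + f) := by
  have h1f : 0 < 1 + f := by linarith
  have hdelay : dJS - dJL = BN * (f - 1) / (1 + f) := by
    rw [hdJS, hdJL, htJ]
    exact delay_sub_of_joint_interval ha hR hBN.le h1f
  have hlarge : CJL * TrL = 2 / √(1 + f) * √(BN * B) := by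
    have h := sqrt_joint_count_mul_sqrt_cost (B := B) ha hR hBN.le h1f.le zero_le_one
    rw [mul_one, sqrt_one, div_one] at h
    rw [hCJL, hCJ, hTrL, div_mul_eq_mul_div, h]
    field_simp
    rw [sq_sqrt h1f.le]
  have hsmall : CJS * TrS = 2 * √f / √(1 + f) * √(BN * B) := by
    rw [hCJS, hCJ, hTrS, div_mul_eq_mul_div, mul_assoc,
      sqrt_joint_count_mul_sqrt_cost ha hR hBN.le h1f.le hf0.le]
    field_simp
    rw [sq_sqrt hf0.le, sq_sqrt h1f.le]
    ring
  rw [show BN + dJS - dJL - CJS * TrS + CJL * TrL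
      = BN + (dJS - dJL) - CJS * TrS + CJL * TrL by ring, hdelay, hsmall, hlarge]
  field_simp
  ring

/-- For `a, R, B, Bᴺ > 0` and `0 < f < 1`, with the joint-blob
quantities `t_J, d_{J,L}, d_{J,S}, C_J, C_{J,L}, C_{J,S}` and the stand-alone
per-transaction costs `Tr_L, Tr_S` as in the model, the Nash bargaining payment
of the large rollup simplifies to
`(Bᴺ + d_{J,S} − d_{J,L} − C_{J,S}·Tr_S + C_{J,L}·Tr_L)/2
  = Bᴺ·f/(1+f) + √(Bᴺ·B)·(1 − √f)/√(1+f)`,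
which depends only on `B`, `Bᴺ` and `f`. -/
theorem nash_payment_formula
    (a R B BN f : ℝ) (ha : 0 < a) (hR : 0 < R) (hB : 0 < B) (hBN : 0 < BN)
    (hf0 : 0 < f) (hf1 : f < 1)
    (tJ dJL dJS CJ CJL CJS TrL TrS : ℝ)
    (htJ : tJ = Real.sqrt (2 * BN / (a * (1 + f) * R)))
    (hdJL : dJL = a * R * tJ ^ 2 / 2)
    (hdJS : dJS = a * R * f * tJ ^ 2 / 2)
    (hCJ : CJ = Real.sqrt (2 * BN * (1 + f) * R / a))
    (hCJL : CJL = CJ / (1 + f))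
    (hCJS : CJS = f * CJ / (1 + f))
    (hTrL : TrL = Real.sqrt (2 * B * a / R))
    (hTrS : TrS = Real.sqrt (2 * B * a / (R * f))) :
    (BN + dJS - dJL - CJS * TrS + CJL * TrL) / 2 =
      BN * f / (1 + f) +
        Real.sqrt (BN * B) * (1 - Real.sqrt f) / Real.sqrt (1 + f) :=
  nash_payment_formula_general a R B BN f ha hR hBN hf0 tJ dJL dJS CJ CJL CJS TrL TrS htJ hdJL hdJS
    hCJ hCJL hCJS hTrL hTrS
end

section
/- Let B, Bᴺ > 0 and 0 < f < 1 with Bᴺ/B ≥ (1+f)/(1+√f)². Then B₁ = Bᴺ·f/(1+f) + √(Bᴺ·B)·(1 − √f)/√(1+f) satisfies 0 < B₁ < Bᴺ. That is, the Nash bargaining solution always assigns the large rollup a payment strictly between 0 and the full joint blob price. -/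
/-- For `B, Bᴺ > 0`, `0 < f < 1` with `Bᴺ/B ≥ (1+f)/(1+√f)²`, the
Nash bargaining payment `B₁ = Bᴺ·f/(1+f) + √(Bᴺ·B)·(1 − √f)/√(1+f)` of the large
rollup satisfies `0 < B₁ < Bᴺ`. -/
theorem nash_payment_internal
    (B BN f : ℝ) (hB : 0 < B) (hBN : 0 < BN) (hf0 : 0 < f) (hf1 : f < 1)
    (hratio : BN / B ≥ (1 + f) / (1 + Real.sqrt f) ^ 2) :
    0 < BN * f / (1 + f) +
        Real.sqrt (BN * B) * (1 - Real.sqrt f) / Real.sqrt (1 + f) ∧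
    BN * f / (1 + f) +
        Real.sqrt (BN * B) * (1 - Real.sqrt f) / Real.sqrt (1 + f) < BN := by
  set s := Real.sqrt f with hs
  set t := Real.sqrt (1 + f) with ht
  have hs0 : 0 < s := Real.sqrt_pos.mpr hf0
  have hs2 : s ^ 2 = f := Real.sq_sqrt hf0.le
  have hs1 : s < 1 := by nlinarith
  have ht0 : 0 < t := Real.sqrt_pos.mpr (by linarith)
  have ht2 : t ^ 2 = 1 + f := Real.sq_sqrt (by linarith)
  have hfp : (0:ℝ) < 1 + f := by linarith
  have hsq : 0 ≤ Real.sqrt (BN * B) := Real.sqrt_nonneg _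
  constructor
  · have h1 : 0 < BN * f / (1 + f) := by positivity
    have h2 : 0 ≤ Real.sqrt (BN * B) * (1 - s) / t :=
      div_nonneg (mul_nonneg hsq (by linarith)) ht0.le
    linarith
  · -- key bound: √(BN*B) * t ≤ BN * (1+s)
    have hBle : B * (1 + f) ≤ BN * (1 + s) ^ 2 := by
      have h := (div_le_div_iff₀ (by positivity) hB).mp hratio
      nlinarith
    have h1 : Real.sqrt (BN * B) * t ≤ BN * (1 + s) := by
      rw [← Real.sqrt_mul (by positivity)]
      calc Real.sqrt (BN * B * (1 + f)) ≤ Real.sqrt ((BN * (1 + s)) ^ 2) := by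
            apply Real.sqrt_le_sqrt; nlinarith
        _ = BN * (1 + s) := Real.sqrt_sq (by positivity)
    have key : Real.sqrt (BN * B) * (1 - s) / t ≤ BN * (1 - f) / (1 + f) := by
      rw [div_le_div_iff₀ ht0 hfp]
      have h3 : Real.sqrt (BN * B) * (1 - s) * (1 + f)
          = (Real.sqrt (BN * B) * t) * ((1 - s) * t) := by rw [← ht2]; ring
      have h4 : (Real.sqrt (BN * B) * t) * ((1 - s) * t)
          ≤ (BN * (1 + s)) * ((1 - s) * t) :=
        mul_le_mul_of_nonneg_right h1 (mul_nonneg (by linarith) ht0.le)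
      have h5 : (BN * (1 + s)) * ((1 - s) * t) = BN * (1 - f) * t := by
        linear_combination (-BN * t) * hs2
      linarith
    have heq : BN * f / (1 + f) + BN * (1 - f) / (1 + f) = BN / (1 + f) := by
      field_simp; ring
    have hlt : BN / (1 + f) < BN := div_lt_self hBN (by linarith)
    linarith
end

section
/- Let B, Bᴺ > 0 and 0 < f < 1 with Bᴺ/B ≥ (1+f)/(1+√f)². Then B₁ = Bᴺ·f/(1+f) + √(Bᴺ·B)·(1 − √f)/√(1+f) satisfies B₁ ≤ Bᴺ/(1+f). That is, in the Nash bargaining solution the large rollup pays no more than its proportional share B₁^{pr} = Bᴺ/(1+f) of the joint blob price. -/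
/-- For `B, Bᴺ > 0`, `0 < f < 1` with `Bᴺ/B ≥ (1+f)/(1+√f)²`, the
Nash bargaining payment `B₁ = Bᴺ·f/(1+f) + √(Bᴺ·B)·(1 − √f)/√(1+f)` of the large
rollup is at most its proportional share `B₁^{pr} = Bᴺ/(1+f)`. -/
theorem nash_payment_le_proportional
    (B BN f : ℝ) (hB : 0 < B) (hBN : 0 < BN) (hf0 : 0 < f) (hf1 : f < 1)
    (hratio : BN / B ≥ (1 + f) / (1 + Real.sqrt f) ^ 2) :
    BN * f / (1 + f) +
        Real.sqrt (BN * B) * (1 - Real.sqrt f) / Real.sqrt (1 + f) ≤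
      BN / (1 + f) := by
  set s := Real.sqrt f with hs
  set t := Real.sqrt (1 + f) with ht
  have hf1' : (0:ℝ) < 1 + f := by linarith
  have hs2 : s ^ 2 = f := Real.sq_sqrt hf0.le
  have hs0 : 0 < s := Real.sqrt_pos.mpr hf0
  have hs1 : s < 1 := by
    rw [hs, show (1:ℝ) = Real.sqrt 1 by simp]; exact Real.sqrt_lt_sqrt hf0.le hf1
  have ht2 : t ^ 2 = 1 + f := Real.sq_sqrt hf1'.le
  have ht0 : 0 < t := Real.sqrt_pos.mpr hf1'
  have h1s : (0:ℝ) < 1 + s := by linarith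
  -- from hratio: B*(1+f) ≤ BN*(1+s)^2
  have hkey0 : B * (1 + f) ≤ BN * (1 + s) ^ 2 := by
    have := (div_le_div_iff₀ (by positivity) hB).mp hratio
    nlinarith
  -- √(BN*B) * t ≤ BN*(1+s)
  have hkey : Real.sqrt (BN * B) * t ≤ BN * (1 + s) := by
    have h1 : Real.sqrt (BN * B) * t = Real.sqrt (BN * B * (1 + f)) := by
      rw [ht, ← Real.sqrt_mul (by positivity)]
    have h2 : BN * (1 + s) = Real.sqrt ((BN * (1 + s)) ^ 2) := by
      rw [Real.sqrt_sq (by positivity)]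
    rw [h1, h2]
    apply Real.sqrt_le_sqrt
    nlinarith
  have hmul : Real.sqrt (BN * B) * (1 - s) * t ≤ BN * (1 - f) := by
    nlinarith [Real.sqrt_nonneg (BN * B), Real.sqrt_nonneg (BN * B)]
  have heq : Real.sqrt (BN * B) * (1 - s) / t
      = Real.sqrt (BN * B) * (1 - s) * t / (1 + f) := by
    rw [← ht2]; field_simp
  rw [heq]
  have hfin : BN * f / (1 + f) + BN * (1 - f) / (1 + f) = BN / (1 + f) := by
    field_simp; ring
  have hdiv : Real.sqrt (BN * B) * (1 - s) * t / (1 + f) ≤ BN * (1 - f) / (1 + f) := by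
    gcongr
  linarith
end

section
/- Let B, Bᴺ > 0 with Bᴺ ≤ B, and 0 < f < 1. Then B₁ = Bᴺ·f/(1+f) + √(Bᴺ·B)·(1 − √f)/√(1+f) satisfies B₁ ≥ Bᴺ/2. That is, the large rollup never pays less than half of the new joint blob price in the Nash bargaining solution. -/
/-- For `B, Bᴺ > 0` with `Bᴺ ≤ B` and `0 < f < 1`, the Nash
bargaining payment `B₁ = Bᴺ·f/(1+f) + √(Bᴺ·B)·(1 − √f)/√(1+f)` of the large
rollup is at least half the new joint blob price: `B₁ ≥ Bᴺ/2`. -/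
theorem nash_payment_ge_half
    (B BN f : ℝ) (hB : 0 < B) (hBN : 0 < BN) (hle : BN ≤ B)
    (hf0 : 0 < f) (hf1 : f < 1) :
    BN * f / (1 + f) +
        Real.sqrt (BN * B) * (1 - Real.sqrt f) / Real.sqrt (1 + f) ≥
      BN / 2 := by
  set s := Real.sqrt f with hs_def
  set t := Real.sqrt (1 + f) with ht_def
  set u := Real.sqrt (BN * B) with hu_def
  have hs2 : s ^ 2 = f := Real.sq_sqrt hf0.le
  have ht2 : t ^ 2 = 1 + f := Real.sq_sqrt (by linarith)
  have hu2 : u ^ 2 = BN * B := Real.sq_sqrt (by positivity)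
  have hs0 : 0 < s := Real.sqrt_pos.mpr hf0
  have ht0 : 0 < t := Real.sqrt_pos.mpr (by linarith)
  have hu0 : 0 < u := Real.sqrt_pos.mpr (by positivity)
  have hs1 : s < 1 := by nlinarith
  have huBN : BN ≤ u := by nlinarith
  have h2t : 1 + s ≤ 2 * t := by nlinarith [sq_nonneg (s - 1)]
  have key : 0 ≤ 2 * BN * f + 2 * u * (1 - s) * t - BN * (1 + f) := by
    nlinarith [mul_nonneg (mul_nonneg (sub_nonneg.mpr huBN) (sub_nonneg.mpr hs1.le)) ht0.le,
      mul_nonneg (mul_nonneg hBN.le (sub_nonneg.mpr hs1.le)) (sub_nonneg.mpr h2t)]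
  have hteq : t * t = 1 + f := by nlinarith
  have heq : BN * f / (1 + f) + u * (1 - s) / t - BN / 2 =
      (2 * BN * f + 2 * u * (1 - s) * t - BN * (1 + f)) / (2 * (1 + f)) := by
    rw [← hteq]
    field_simp
  have : 0 ≤ BN * f / (1 + f) + u * (1 - s) / t - BN / 2 := by
    rw [heq]
    positivity
  linarith
end

section
/- Let p > 0 and define h(f) = 2/(1+f) + p·(1−f)/√(1+f) − √f for f ∈ (0, 1]. Then h is strictly decreasing on (0, 1], h(1) = 0, and consequently h(f) ≥ 0 for all f ∈ (0, 1], with equality only at f = 1. -/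
lemma icf_anti (p : ℝ) (hp : 0 < p) :
    StrictAntiOn
      (fun f : ℝ => 2 / (1 + f) + p * (1 - f) / Real.sqrt (1 + f) - Real.sqrt f)
      (Set.Ioc 0 1) := by
  intro x hx y hy hxy
  simp only
  have h1x : (0:ℝ) < 1 + x := by linarith [hx.1]
  have h1y : (0:ℝ) < 1 + y := by linarith [hy.1]
  have hsx : 0 < Real.sqrt (1 + x) := Real.sqrt_pos.mpr h1x
  have hsy : 0 < Real.sqrt (1 + y) := Real.sqrt_pos.mpr h1y
  have hss : Real.sqrt (1 + x) ≤ Real.sqrt (1 + y) := Real.sqrt_le_sqrt (by linarith)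
  have hA : 2 / (1 + y) < 2 / (1 + x) := by
    apply div_lt_div_of_pos_left <;> linarith
  have h1my : 0 ≤ 1 - y := by linarith [hy.2]
  have hB1 : p * (1 - y) / Real.sqrt (1 + y) ≤ p * (1 - y) / Real.sqrt (1 + x) :=
    div_le_div_of_nonneg_left (by positivity) hsx hss
  have hB2 : p * (1 - y) / Real.sqrt (1 + x) ≤ p * (1 - x) / Real.sqrt (1 + x) :=
    (div_le_div_iff_of_pos_right hsx).mpr (by nlinarith)
  have hC : Real.sqrt x < Real.sqrt y := Real.sqrt_lt_sqrt hx.1.le hxy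
  linarith

/-- For `p > 0`, the function
`h(f) = 2/(1+f) + p·(1−f)/√(1+f) − √f` is strictly decreasing on `(0, 1]`,
satisfies `h(1) = 0`, and hence `h(f) ≥ 0` on `(0, 1]` with equality only at
`f = 1`. -/
theorem improvement_comparison_function
    (p : ℝ) (hp : 0 < p) :
    StrictAntiOn
      (fun f : ℝ => 2 / (1 + f) + p * (1 - f) / Real.sqrt (1 + f) - Real.sqrt f)
      (Set.Ioc 0 1) ∧
    (2 / (1 + (1:ℝ)) + p * (1 - 1) / Real.sqrt (1 + 1) - Real.sqrt 1 = 0) ∧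
    (∀ f ∈ Set.Ioc (0:ℝ) 1,
      0 ≤ 2 / (1 + f) + p * (1 - f) / Real.sqrt (1 + f) - Real.sqrt f ∧
      (2 / (1 + f) + p * (1 - f) / Real.sqrt (1 + f) - Real.sqrt f = 0 ↔ f = 1)) := by
  have key := icf_anti p hp
  have hval : 2 / (1 + (1:ℝ)) + p * (1 - 1) / Real.sqrt (1 + 1) - Real.sqrt 1 = 0 := by
    norm_num [Real.sqrt_one]
  refine ⟨key, hval, ?_⟩
  intro f hf
  rcases eq_or_lt_of_le hf.2 with h1 | h1
  · subst h1
    constructor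
    · rw [hval]
    · norm_num [Real.sqrt_one]
  · have hlt := key hf (by norm_num : (1:ℝ) ∈ Set.Ioc (0:ℝ) 1) h1
    simp only at hlt
    rw [hval] at hlt
    exact ⟨hlt.le, ⟨fun h => absurd h (by linarith), fun h => absurd h (by linarith)⟩⟩
end
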